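/- arXiv:1405.0805 — 15 statements merged into one kernel-verified Lean document; each statement's English description precedes it below -/
import Mathlib

section
/- For every finite nonempty vocabulary A and every collection X of subsets of A, there exists an abstract dialectical framework D over A whose set of (supported) models is exactly X. (In the paper's notation: propositional logic is at most as expressive as ADFs under the supported model semantics, PL ≤_e ADF^su.) -/
/-- An ADF over vocabulary `α` is given by its acceptance conditions
`C : α → Set α → Prop` (we take all links to be present, so each `C a`
may depend on all of `α`). `M` is a (supported) model iff for every
statement `a`: `a ∈ M ↔ C a M`. -/
def isModel {α : Type*} (C : α → Set α → Prop) (M : Set α) : Prop :=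
  ∀ a : α, a ∈ M ↔ C a M

/-- For every finite nonempty vocabulary and every collection `X` of
interpretations there is an ADF whose set of supported models is exactly `X`
(PL ≤ₑ ADF^su). -/
theorem pl_le_adf_supported {α : Type*} [Fintype α] [Nonempty α]
    (X : Set (Set α)) :
    ∃ C : α → Set α → Prop, {M : Set α | isModel C M} = X := by
  refine ⟨fun a M => (M ∈ X ∧ a ∈ M) ∨ (M ∉ X ∧ a ∉ M), ?_⟩
  ext M
  simp only [Set.mem_setOf_eq, isModel]
  constructor
  · intro h
    by_contra hM
    obtain ⟨a⟩ := ‹Nonempty α›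
    have := h a
    tauto
  · intro hM a
    tauto
end

section
/- Let A be a finite vocabulary and X a nonempty collection of subsets of A. Define an ADF D over A by setting, for each a ∈ A and M ⊆ A, C_a(M) = t iff ((M ∈ X and a ∈ M) or (M ∉ X and a ∉ M)). Then the set of models of D is exactly X. -/
/-- For a nonempty collection `X` of subsets of a finite vocabulary, the ADF
whose acceptance conditions are given by
`C a M = t` iff (`M ∈ X` and `a ∈ M`) or (`M ∉ X` and `a ∉ M`)
has exactly `X` as its set of (supported) models. -/
theorem realise_supported_models {α : Type*} [Fintype α]
    (X : Set (Set α)) (hX : X.Nonempty)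
    (C : α → Set α → Prop)
    (hC : ∀ (a : α) (M : Set α),
      C a M ↔ ((M ∈ X ∧ a ∈ M) ∨ (M ∉ X ∧ a ∉ M))) :
    {M : Set α | isModel C M} = X := by
  ext M
  simp only [Set.mem_setOf_eq, isModel]
  constructor
  · intro h
    by_contra hM
    -- every a yields a contradiction, so α is empty
    have hemp : ∀ a : α, False := by
      intro a
      have := (h a).trans (hC a M)
      simp [hM] at this
    -- hence every set equals ∅, in particular M and the witness of hX
    obtain ⟨N, hN⟩ := hX
    have : M = N := by
      ext a; exact (hemp a).elim
    exact hM (this ▸ hN)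
  · intro hM a
    rw [hC]
    simp [hM]
end

section
/- Let A be a finite vocabulary with |A| = n, and let X be a collection of subsets of A such that exactly m subsets of A do not belong to X (i.e., |2^A \ X| = m). Then the number of distinct ADFs D over A (i.e., distinct families of acceptance conditions (C_a)_{a∈A}) whose set of models equals X is exactly (2^n − 1)^m. -/
/-- An ADF over the finite vocabulary `α`, given by acceptance conditions
`C : α → Finset α → Bool` (a two-valued function on interpretations for each
statement). `M` is a (supported) model iff for every `a`: `a ∈ M ↔ C a M = t`. -/
def isModelB {α : Type*} (C : α → Finset α → Bool) (M : Finset α) : Prop :=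
  ∀ a : α, a ∈ M ↔ C a M = true

/-- If `|A| = n` and exactly `m` subsets of `A` do not belong to `X`, then the
number of distinct ADFs over `A` (distinct families of acceptance conditions)
whose set of models equals `X` is exactly `(2^n - 1)^m`. -/
theorem number_of_adf_realisations {α : Type*} [Fintype α] [DecidableEq α]
    (n m : ℕ) (hn : Fintype.card α = n)
    (X : Finset (Finset α)) (hm : (Finset.univ \ X).card = m) :
    Nat.card {C : α → Finset α → Bool //
        ∀ M : Finset α, isModelB C M ↔ M ∈ X} = (2 ^ n - 1) ^ m := by
  classical
  set χ : Finset α → α → Bool := fun M a => decide (a ∈ M) with hχ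
  have hmod : ∀ (C : α → Finset α → Bool) (M : Finset α),
      isModelB C M ↔ (fun a => C a M) = χ M := by
    intro C M
    simp only [isModelB, funext_iff, hχ]
    constructor
    · intro h a
      rw [Bool.eq_iff_iff, decide_eq_true_iff]
      exact (h a).symm
    · intro h a
      rw [h a, decide_eq_true_iff]
  have e : {C : α → Finset α → Bool // ∀ M, isModelB C M ↔ M ∈ X} ≃
      ∀ M : Finset α, {g : α → Bool // (g = χ M) ↔ M ∈ X} := by
    refine Equiv.trans ?_ (Equiv.subtypePiEquivPi)
    refine (Equiv.piComm _).subtypeEquiv ?_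
    intro C
    show (∀ M, isModelB C M ↔ M ∈ X) ↔ ∀ M, (fun a => C a M) = χ M ↔ M ∈ X
    constructor
    · intro h M; exact ((hmod C M).symm.trans (h M))
    · intro h M; exact ((hmod C M).trans (h M))
  rw [Nat.card_congr e, Nat.card_pi]
  have hcard : ∀ M : Finset α, Nat.card {g : α → Bool // (g = χ M) ↔ M ∈ X} =
      if M ∈ X then 1 else 2 ^ n - 1 := by
    intro M
    by_cases h : M ∈ X
    · rw [if_pos h]
      have : {g : α → Bool // (g = χ M) ↔ M ∈ X} ≃ {g : α → Bool // g = χ M} :=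
        Equiv.subtypeEquivRight (fun g => by simp [h])
      rw [Nat.card_congr this, Nat.card_eq_fintype_card, Fintype.card_subtype_eq]
    · rw [if_neg h]
      have : {g : α → Bool // (g = χ M) ↔ M ∈ X} ≃ {g : α → Bool // ¬ (g = χ M)} :=
        Equiv.subtypeEquivRight (fun g => by simp [h])
      rw [Nat.card_congr this, Nat.card_eq_fintype_card, Fintype.card_subtype_compl,
        Fintype.card_subtype_eq, Fintype.card_fun, Fintype.card_bool, hn]
  rw [Finset.prod_congr rfl (fun M _ => hcard M),
    ← Finset.prod_sdiff (Finset.subset_univ X)]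
  have h1 : ∏ M ∈ X, (if M ∈ X then 1 else 2 ^ n - 1) = 1 :=
    Finset.prod_eq_one fun M hM => by simp [hM]
  have h2 : ∏ M ∈ Finset.univ \ X, (if M ∈ X then 1 else 2 ^ n - 1)
      = (2 ^ n - 1) ^ m := by
    rw [Finset.prod_congr rfl (fun M hM => ?_), Finset.prod_const, hm]
    simp [(Finset.mem_sdiff.mp hM).2]
  rw [h1, h2, mul_one]
end

section
/- There is no bipolar ADF over the vocabulary A = {x, y, z} whose set of (supported) models equals X₁ = {∅, {x,y}, {x,z}, {y,z}}. Together with the fact that X₁ is realisable by a (non-bipolar) ADF, this shows that bipolar ADFs under the supported model semantics are strictly less expressive than general ADFs under the supported model semantics (BADF^su <_e ADF^su). -/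
/-- `b` is supporting for `a`: adding `b` never destroys acceptance. -/
def supporting {α : Type*} (C : α → Set α → Prop) (b a : α) : Prop :=
  ∀ Z : Set α, C a Z → C a (Z ∪ {b})

/-- `b` is attacking for `a`: removing `b` never destroys acceptance. -/
def attacking {α : Type*} (C : α → Set α → Prop) (b a : α) : Prop :=
  ∀ Z : Set α, C a (Z ∪ {b}) → C a Z

/-- An ADF is bipolar iff every link is supporting or attacking. -/
def bipolar {α : Type*} (C : α → Set α → Prop) : Prop :=
  ∀ b a : α, supporting C b a ∨ attacking C b a

section Aux

variable (C : Fin 3 → Set (Fin 3) → Prop)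

lemma badf_lemma2 (hbip : bipolar C) (h₀ : ∀ a, ¬ C a ∅)
    (hpair : ∀ p q a : Fin 3, p ≠ q → (C a {p, q} ↔ a = p ∨ a = q))
    (x y z : Fin 3) (hxy : x ≠ y) (hxz : x ≠ z)
    (hU : ¬ C x (({x, z} : Set (Fin 3)) ∪ {y})) :
    ¬ C x {y} ∧ C x {x} := by
  have hatt : attacking C y x := by
    rcases hbip y x with hs | ha
    · exact absurd (hs {x, z} ((hpair x z x hxz).mpr (Or.inl rfl))) hU
    · exact ha
  constructor
  · intro hy
    exact h₀ x (hatt ∅ (by simpa using hy))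
  · refine hatt {x} ?_
    rw [Set.singleton_union]
    exact (hpair x y x hxy).mpr (Or.inl rfl)

lemma badf_master (hbip : bipolar C) (h₀ : ∀ a, ¬ C a ∅)
    (hpair : ∀ p q a : Fin 3, p ≠ q → (C a {p, q} ↔ a = p ∨ a = q))
    (x y z : Fin 3) (hxy : x ≠ y) (hxz : x ≠ z) (hyz : y ≠ z)
    (huniv : ∀ a : Fin 3, a = x ∨ a = y ∨ a = z)
    (hCxy : ¬ C x {y}) (hCxz : ¬ C x {z}) (hCyx : C y {x})
    (hmy : ¬ isModel C {y}) (hmz : ¬ isModel C {z}) : False := by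
  have hsxy : supporting C x y := by
    rcases hbip x y with h | h
    · exact h
    · exact ((h₀ y) (h ∅ (by simpa using hCyx))).elim
  have hCyz : ¬ C y {z} := by
    intro hz
    have h1 := hsxy {z} hz
    rw [Set.singleton_union] at h1
    rcases (hpair z x y (Ne.symm hxz)).mp h1 with h | h
    · exact hyz h
    · exact hxy h.symm
  have haty : attacking C z y := by
    rcases hbip z y with h | h
    · have h1 := h {x} hCyx
      rw [Set.singleton_union] at h1
      rcases (hpair x z y hxz).mp h1 with h' | h'
      · exact (hxy h'.symm).elim
      · exact (hyz h').elim
    · exact h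
  have hCyy : C y {y} := by
    refine haty {y} ?_
    rw [Set.singleton_union]
    exact (hpair y z y hyz).mpr (Or.inl rfl)
  have hCzy : C z {y} := by
    unfold isModel at hmy
    push_neg at hmy
    obtain ⟨a, ha⟩ := hmy
    rw [Set.mem_singleton_iff] at ha
    rcases huniv a with h | h | h <;> rw [h] at ha
    · rcases ha with ⟨h1, -⟩ | ⟨-, h2⟩
      · exact (hxy h1).elim
      · exact (hCxy h2).elim
    · rcases ha with ⟨-, h2⟩ | ⟨h1, -⟩
      · exact (h2 hCyy).elim
      · exact (h1 rfl).elim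
    · rcases ha with ⟨h1, -⟩ | ⟨-, h2⟩
      · exact (hyz h1.symm).elim
      · exact h2
  have hsyz : supporting C y z := by
    rcases hbip y z with h | h
    · exact h
    · exact ((h₀ z) (h ∅ (by simpa using hCzy))).elim
  have hatz : attacking C x z := by
    rcases hbip x z with h | h
    · have h1 := h {y} hCzy
      rw [Set.singleton_union] at h1
      rcases (hpair y x z (Ne.symm hxy)).mp h1 with h' | h'
      · exact (hyz h'.symm).elim
      · exact (hxz h'.symm).elim
    · exact h
  have hCzz : C z {z} := by
    refine hatz {z} ?_
    rw [Set.singleton_union]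
    exact (hpair z x z (Ne.symm hxz)).mpr (Or.inl rfl)
  unfold isModel at hmz
  push_neg at hmz
  obtain ⟨a, ha⟩ := hmz
  rw [Set.mem_singleton_iff] at ha
  rcases huniv a with h | h | h <;> rw [h] at ha
  · rcases ha with ⟨h1, -⟩ | ⟨-, h2⟩
    · exact hxz h1
    · exact hCxz h2
  · rcases ha with ⟨h1, -⟩ | ⟨-, h2⟩
    · exact hyz h1
    · exact hCyz h2
  · rcases ha with ⟨-, h2⟩ | ⟨h1, -⟩
    · exact h2 hCzz
    · exact h1 rfl

lemma badf_outer (hbip : bipolar C) (h₀ : ∀ a, ¬ C a ∅)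
    (hpair : ∀ p q a : Fin 3, p ≠ q → (C a {p, q} ↔ a = p ∨ a = q))
    (x y z : Fin 3) (hxy : x ≠ y) (hxz : x ≠ z) (hyz : y ≠ z)
    (huniv : ∀ a : Fin 3, a = x ∨ a = y ∨ a = z)
    (hxU : ¬ C x ((({x, z} : Set (Fin 3)) ∪ {y})))
    (hxU' : ¬ C x ((({x, y} : Set (Fin 3)) ∪ {z})))
    (hmx : ¬ isModel C {x}) (hmy : ¬ isModel C {y}) (hmz : ¬ isModel C {z}) :
    False := by
  obtain ⟨hxy_f, hxx⟩ := badf_lemma2 C hbip h₀ hpair x y z hxy hxz hxU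
  obtain ⟨hxz_f, -⟩ := badf_lemma2 C hbip h₀ hpair x z y hxz hxy hxU'
  unfold isModel at hmx
  push_neg at hmx
  obtain ⟨a, ha⟩ := hmx
  rw [Set.mem_singleton_iff] at ha
  rcases huniv a with h | h | h <;> rw [h] at ha
  · rcases ha with ⟨-, h2⟩ | ⟨h1, -⟩
    · exact h2 hxx
    · exact h1 rfl
  · rcases ha with ⟨h1, -⟩ | ⟨-, h2⟩
    · exact hxy h1.symm
    · exact badf_master C hbip h₀ hpair x y z hxy hxz hyz huniv hxy_f hxz_f h2 hmy hmz
  · rcases ha with ⟨h1, -⟩ | ⟨-, h2⟩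
    · exact hxz h1.symm
    · exact badf_master C hbip h₀ hpair x z y hxz hxy (Ne.symm hyz)
        (fun a => (huniv a).imp id Or.symm) hxz_f hxy_f h2 hmz hmy

end Aux

/-- The model set `X₁ = {∅, {x,y}, {x,z}, {y,z}}` over the vocabulary
`{x, y, z}` (modelled as `Fin 3`) is not realisable by any bipolar ADF under
the supported model semantics, although it is realisable by a (non-bipolar)
ADF; hence BADF^su <ₑ ADF^su. -/
theorem badf_strictly_less_expressive_than_adf_supported :
    (¬ ∃ C : Fin 3 → Set (Fin 3) → Prop, bipolar C ∧
        {M : Set (Fin 3) | isModel C M} =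
          ({∅, {0, 1}, {0, 2}, {1, 2}} : Set (Set (Fin 3)))) ∧
    (∃ C : Fin 3 → Set (Fin 3) → Prop,
        {M : Set (Fin 3) | isModel C M} =
          ({∅, {0, 1}, {0, 2}, {1, 2}} : Set (Set (Fin 3)))) := by
  constructor
  · rintro ⟨C, hbip, hmod⟩
    have hm : ∀ M : Set (Fin 3), isModel C M ↔
        (M = ∅ ∨ M = {0, 1} ∨ M = {0, 2} ∨ M = {1, 2}) := by
      intro M
      have := Set.ext_iff.mp hmod M
      simpa using this
    have h₀ : ∀ a, ¬ C a ∅ := by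
      intro a h
      have h1 := (hm ∅).mpr (Or.inl rfl) a
      simp only [Set.mem_empty_iff_false, false_iff] at h1
      exact h1 h
    have key : ∀ p q a : Fin 3, isModel C {p, q} → (C a {p, q} ↔ a = p ∨ a = q) := by
      intro p q a h
      have h1 := (h a).symm
      simpa using h1
    have m01 : isModel C {0, 1} := (hm _).mpr (Or.inr (Or.inl rfl))
    have m02 : isModel C {0, 2} := (hm _).mpr (Or.inr (Or.inr (Or.inl rfl)))
    have m12 : isModel C {1, 2} := (hm _).mpr (Or.inr (Or.inr (Or.inr rfl)))
    have hpair : ∀ p q a : Fin 3, p ≠ q → (C a {p, q} ↔ a = p ∨ a = q) := by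
      intro p q a hpq
      fin_cases p <;> fin_cases q <;>
        first
          | exact absurd rfl hpq
          | exact key _ _ _ m01
          | exact key _ _ _ m02
          | exact key _ _ _ m12
          | (rw [Set.pair_comm]
             exact (key _ _ _ m01).trans or_comm)
          | (rw [Set.pair_comm]
             exact (key _ _ _ m02).trans or_comm)
          | (rw [Set.pair_comm]
             exact (key _ _ _ m12).trans or_comm)
    have nms : ∀ M : Set (Fin 3),
        M = {0} ∨ M = {1} ∨ M = {2} ∨ M = {0, 1, 2} → ¬ isModel C M := by
      intro M hM h
      rcases (hm M).mp h with h' | h' | h' | h' <;> rcases hM with rfl | rfl | rfl | rfl <;>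
        first
          | simpa using Set.ext_iff.mp h' 0
          | simpa using Set.ext_iff.mp h' 1
          | simpa using Set.ext_iff.mp h' 2
    have hex : ∃ x : Fin 3, ¬ C x {0, 1, 2} := by
      have h := nms _ (Or.inr (Or.inr (Or.inr rfl)))
      unfold isModel at h
      push_neg at h
      obtain ⟨a, ha⟩ := h
      rcases ha with ⟨-, h2⟩ | ⟨h1, -⟩
      · exact ⟨a, h2⟩
      · exact absurd (by fin_cases a <;> simp) h1
    obtain ⟨x, hxU⟩ := hex
    have nm0 := nms _ (Or.inl rfl)
    have nm1 := nms _ (Or.inr (Or.inl rfl))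
    have nm2 := nms _ (Or.inr (Or.inr (Or.inl rfl)))
    fin_cases x
    · exact badf_outer C hbip h₀ hpair 0 1 2 (by decide) (by decide) (by decide)
        (by decide)
        (by rw [show (({0, 2} : Set (Fin 3)) ∪ {1}) = {0, 1, 2} by
              ext a; fin_cases a <;> simp]; exact hxU)
        (by rw [show (({0, 1} : Set (Fin 3)) ∪ {2}) = {0, 1, 2} by
              ext a; fin_cases a <;> simp]; exact hxU)
        nm0 nm1 nm2
    · exact badf_outer C hbip h₀ hpair 1 0 2 (by decide) (by decide) (by decide)
        (by decide)
        (by rw [show (({1, 2} : Set (Fin 3)) ∪ {0}) = {0, 1, 2} by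
              ext a; fin_cases a <;> simp]; exact hxU)
        (by rw [show (({1, 0} : Set (Fin 3)) ∪ {2}) = {0, 1, 2} by
              ext a; fin_cases a <;> simp]; exact hxU)
        nm1 nm0 nm2
    · exact badf_outer C hbip h₀ hpair 2 0 1 (by decide) (by decide) (by decide)
        (by decide)
        (by rw [show (({2, 1} : Set (Fin 3)) ∪ {0}) = {0, 1, 2} by
              ext a; fin_cases a <;> simp]; exact hxU)
        (by rw [show (({2, 0} : Set (Fin 3)) ∪ {1}) = {0, 1, 2} by
              ext a; fin_cases a <;> simp]; exact hxU)
        nm2 nm0 nm1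
  · refine ⟨fun a M => a ∈ M ∧
      (M = ∅ ∨ M = {0, 1} ∨ M = {0, 2} ∨ M = {1, 2}), ?_⟩
    ext M
    simp only [Set.mem_setOf_eq, Set.mem_insert_iff, Set.mem_singleton_iff]
    constructor
    · intro h
      by_contra hM
      have hemp : M = ∅ := by
        ext a
        simp only [Set.mem_empty_iff_false, iff_false]
        intro haM
        exact hM ((h a).mp haM).2
      exact hM (Or.inl hemp)
    · intro hM a
      exact ⟨fun h => ⟨h, hM⟩, fun h => h.1⟩
end

section
/- Consider the vocabulary A = {a} and the bipolar ADF D over A with acceptance condition C_a(Z) = t iff a ∈ Z (acceptance formula φ_a = a). The set of (supported) models of D is {∅, {a}}, and there is no argumentation framework over A whose set of stable extensions equals {∅, {a}}. Hence AFs under the stable extension semantics are strictly less expressive than bipolar ADFs under the supported model semantics (AF <_e BADF^su). -/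
/-- AF conflict-freeness. -/
def conflictFree {α : Type*} (R : α → α → Prop) (S : Set α) : Prop :=
  ∀ a ∈ S, ∀ b ∈ S, ¬ R a b

/-- AF stable extension. -/
def stableExt {α : Type*} (R : α → α → Prop) (S : Set α) : Prop :=
  conflictFree R S ∧ ∀ a : α, a ∉ S → ∃ b ∈ S, R b a

lemma fin1_set (S : Set (Fin 1)) : S = ∅ ∨ S = {0} := by
  by_cases h : (0 : Fin 1) ∈ S
  · right
    ext x
    fin_cases x
    simp [h]
  · left
    ext x
    fin_cases x
    simp [h]

/-- Over the vocabulary `{a}` (modelled as `Fin 1`), the ADF with acceptance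
formula `φ_a = a` is bipolar, its set of supported models is `{∅, {a}}`, and no
argumentation framework over the same vocabulary has this set as its set of
stable extensions; hence AF <ₑ BADF^su. -/
theorem af_strictly_less_expressive_than_badf_supported
    (C : Fin 1 → Set (Fin 1) → Prop)
    (hC : ∀ (a : Fin 1) (Z : Set (Fin 1)), C a Z ↔ a ∈ Z) :
    bipolar C ∧
    {M : Set (Fin 1) | isModel C M} = ({∅, {0}} : Set (Set (Fin 1))) ∧
    ¬ ∃ R : Fin 1 → Fin 1 → Prop,
        {S : Set (Fin 1) | stableExt R S} = ({∅, {0}} : Set (Set (Fin 1))) := by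
  refine ⟨?_, ?_, ?_⟩
  · intro b a
    left
    intro Z hZ
    rw [hC] at hZ ⊢
    exact Set.mem_union_left _ hZ
  · ext M
    have hM : isModel C M := fun a => (hC a M).symm
    simp only [Set.mem_setOf_eq, Set.mem_insert_iff, Set.mem_singleton_iff, hM, true_iff]
    exact fin1_set M
  · rintro ⟨R, hR⟩
    have hE : stableExt R (∅ : Set (Fin 1)) := by
      have : (∅ : Set (Fin 1)) ∈ {S : Set (Fin 1) | stableExt R S} := by
        rw [hR]; left; rfl
      exact this
    obtain ⟨b, hb, -⟩ := hE.2 0 (by simp)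
    exact hb
end

section
/- Consider the vocabulary A = {a} and the bipolar ADF D over A with acceptance condition C_a(Z) = t iff a ∈ Z (acceptance formula φ_a = a). The set of stable models of D is {∅}, and there is no argumentation framework over A whose set of stable extensions equals {∅}: the only two AFs over A are ({a}, ∅), whose set of stable extensions is {{a}}, and ({a}, {(a,a)}), whose set of stable extensions is empty. Hence AFs under the stable extension semantics are strictly less expressive than bipolar ADFs under the stable model semantics (AF <_e BADF^st). -/
/-- `acc C V Q R`: statements of the (reduct) vocabulary `V` that are accepted
in every interpretation `Z` with `Q ⊆ Z ⊆ V \ R`. -/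
def acc {α : Type*} (C : α → Set α → Prop) (V Q R : Set α) : Set α :=
  {a ∈ V | ∀ Z : Set α, Q ⊆ Z → Z ⊆ V \ R → C a Z}

/-- `rej C V Q R`: statements of the (reduct) vocabulary `V` that are rejected
in every interpretation `Z` with `Q ⊆ Z ⊆ V \ R`. -/
def rej {α : Type*} (C : α → Set α → Prop) (V Q R : Set α) : Set α :=
  {a ∈ V | ∀ Z : Set α, Q ⊆ Z → Z ⊆ V \ R → ¬ C a Z}

/-- Iteration of the operator `Γ_{D^V}` of the reduct of the ADF `C` to the
vocabulary `V`, starting from `(∅, ∅)`. -/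
def gammaIter {α : Type*} (C : α → Set α → Prop) (V : Set α) :
    ℕ → Set α × Set α
  | 0 => (∅, ∅)
  | n + 1 =>
      (acc C V (gammaIter C V n).1 (gammaIter C V n).2,
       rej C V (gammaIter C V n).1 (gammaIter C V n).2)

/-- The least fixpoint of `Γ_{D^V}`, obtained by iterating from `(∅, ∅)`. -/
def gammaLfp {α : Type*} (C : α → Set α → Prop) (V : Set α) :
    Set α × Set α :=
  (⋃ n : ℕ, (gammaIter C V n).1, ⋃ n : ℕ, (gammaIter C V n).2)

/-- `M` is a stable model of the ADF `C` iff `M` is a model and the least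
fixpoint of the operator of the reduct `D^M` is `(M, ∅)`. -/
def isStableModel {α : Type*} (C : α → Set α → Prop) (M : Set α) : Prop :=
  isModel C M ∧ gammaLfp C M = (M, (∅ : Set α))

/-- Over the vocabulary `{a}` (modelled as `Fin 1`), the bipolar ADF with
acceptance formula `φ_a = a` has stable model set `{∅}`; the attack-free AF
over `{a}` has stable extension set `{{a}}`, the self-attacking AF has no
stable extension, and no AF over `{a}` has stable extension set `{∅}`;
hence AF <ₑ BADF^st. -/
theorem af_strictly_less_expressive_than_badf_stable
    (C : Fin 1 → Set (Fin 1) → Prop)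
    (hC : ∀ (a : Fin 1) (Z : Set (Fin 1)), C a Z ↔ a ∈ Z) :
    bipolar C ∧
    {M : Set (Fin 1) | isStableModel C M} = ({∅} : Set (Set (Fin 1))) ∧
    {S : Set (Fin 1) | stableExt (fun _ _ => False) S}
      = ({{0}} : Set (Set (Fin 1))) ∧
    {S : Set (Fin 1) | stableExt (fun _ _ => True) S} = (∅ : Set (Set (Fin 1))) ∧
    ¬ ∃ R : Fin 1 → Fin 1 → Prop,
        {S : Set (Fin 1) | stableExt R S} = ({∅} : Set (Set (Fin 1))) := by
  classical
  have hsets : ∀ M : Set (Fin 1), M = ∅ ∨ M = {0} := by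
    intro M
    by_cases h : (0 : Fin 1) ∈ M
    · right; ext x; have hx : x = 0 := Subsingleton.elim x 0
      subst hx; simp [h]
    · left; ext x; have hx : x = 0 := Subsingleton.elim x 0
      subst hx; simp [h]
  have hiter0 : ∀ n, gammaIter C (∅ : Set (Fin 1)) n = (∅, ∅) := by
    intro n
    induction n with
    | zero => rfl
    | succ n ih =>
      simp only [gammaIter, ih]
      refine Prod.ext ?_ ?_ <;> simp only [acc, rej] <;>
        · ext a; simp
  have hiter1 : ∀ n, gammaIter C ({0} : Set (Fin 1)) n = (∅, ∅) := by
    intro n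
    induction n with
    | zero => rfl
    | succ n ih =>
      simp only [gammaIter, ih]
      refine Prod.ext ?_ ?_
      · ext a
        simp only [acc, Set.mem_setOf_eq, Set.mem_empty_iff_false, iff_false,
          not_and]
        intro _ h
        have := h ∅ (subset_refl _) (Set.empty_subset _)
        rw [hC] at this
        exact this
      · ext a
        simp only [rej, Set.mem_setOf_eq, Set.mem_empty_iff_false, iff_false,
          not_and]
        intro ha h
        have := h {0} (Set.empty_subset _) (by simp)
        rw [hC] at this
        have hx : a = 0 := Subsingleton.elim a 0
        exact this (by simp [hx])
  refine ⟨?_, ?_, ?_, ?_, ?_⟩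
  · intro b a; left
    intro Z hZ
    rw [hC] at *
    exact Set.mem_union_left _ hZ
  · ext M
    simp only [Set.mem_setOf_eq, Set.mem_singleton_iff]
    constructor
    · rintro ⟨_, hfix⟩
      rcases hsets M with rfl | rfl
      · rfl
      · exfalso
        have h0 : (0 : Fin 1) ∈ (gammaLfp C ({0} : Set (Fin 1))).1 := by
          rw [hfix]; simp
        simp only [gammaLfp, Set.mem_iUnion] at h0
        obtain ⟨n, hn⟩ := h0
        rw [hiter1 n] at hn
        exact hn
    · rintro rfl
      refine ⟨fun a => by simp [hC], ?_⟩
      simp only [gammaLfp]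
      refine Prod.ext ?_ ?_ <;> simp only [] <;>
        · ext a; simp only [Set.mem_iUnion]
          constructor
          · rintro ⟨n, hn⟩
            rw [hiter0 n] at hn
            exact hn
          · intro h; exact absurd h (by simp)
  · ext S
    simp only [Set.mem_setOf_eq, Set.mem_singleton_iff]
    constructor
    · rintro ⟨_, h⟩
      rcases hsets S with rfl | rfl
      · obtain ⟨b, hb, _⟩ := h 0 (by simp)
        exact absurd hb (by simp)
      · rfl
    · rintro rfl
      refine ⟨fun a _ b _ hf => hf, fun a ha => ?_⟩
      exact absurd (Subsingleton.elim a 0) (by simpa using ha)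
  · ext S
    simp only [Set.mem_setOf_eq, Set.mem_empty_iff_false, iff_false]
    rintro ⟨cf, h⟩
    rcases hsets S with rfl | rfl
    · obtain ⟨b, hb, _⟩ := h 0 (by simp)
      exact absurd hb (by simp)
    · exact cf 0 (by simp) 0 (by simp) trivial
  · rintro ⟨R, hR⟩
    have h : stableExt R (∅ : Set (Fin 1)) := by
      have : (∅ : Set (Fin 1)) ∈ {S : Set (Fin 1) | stableExt R S} := by
        rw [hR]; rfl
      exact this
    obtain ⟨b, hb, _⟩ := h.2 0 (by simp)
    exact absurd hb (by simp)
end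

section
/- Let A be a finite vocabulary and X a nonempty ⊆-antichain of subsets of A. Define the ADF D^st_X over A by setting, for each a ∈ A and Z ⊆ A, C_a(Z) = t iff there exists M ∈ X with a ∈ M and Z ⊆ M (acceptance formula φ_a = ⋁_{M∈X, a∈M} ⋀_{b∈A\M} ¬b). Then D^st_X is bipolar (every acceptance condition is antitone, so every link is attacking), and the set of stable models of D^st_X is exactly X. -/
/-- For a nonempty ⊆-antichain `X` over a finite vocabulary, the canonical ADF
`D^st_X` with acceptance conditions `C a Z = t` iff `∃ M ∈ X, a ∈ M ∧ Z ⊆ M`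
(acceptance formula `⋁_{M∈X, a∈M} ⋀_{b∈A\M} ¬b`) is bipolar and its set of
stable models is exactly `X`. -/
theorem canonical_badf_realises_antichain_stable {α : Type*} [Fintype α]
    (X : Set (Set α)) (hne : X.Nonempty)
    (hac : ∀ M ∈ X, ∀ N ∈ X, M ⊆ N → M = N)
    (C : α → Set α → Prop)
    (hC : ∀ (a : α) (Z : Set α), C a Z ↔ ∃ M ∈ X, a ∈ M ∧ Z ⊆ M) :
    bipolar C ∧ {M : Set α | isStableModel C M} = X := by
  constructor
  · intro b a
    right
    intro Z h
    rw [hC] at h ⊢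
    obtain ⟨M, hM, haM, hZM⟩ := h
    exact ⟨M, hM, haM, (Set.subset_union_left).trans hZM⟩
  · ext M
    simp only [Set.mem_setOf_eq]
    constructor
    · rintro ⟨hmod, _⟩
      by_cases h : ∃ N ∈ X, M ⊆ N
      · obtain ⟨N, hN, hMN⟩ := h
        have hNM : N ⊆ M := fun a ha =>
          (hmod a).2 ((hC a M).mpr ⟨N, hN, ha, hMN⟩)
        have : M = N := hMN.antisymm hNM
        rwa [this]
      · obtain ⟨N, hN⟩ := hne
        have hMe : M = ∅ := by
          ext a
          simp only [Set.mem_empty_iff_false, iff_false]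
          intro ha
          obtain ⟨N', hN', _, hMN'⟩ := (hC a M).mp ((hmod a).1 ha)
          exact h ⟨N', hN', hMN'⟩
        exact absurd ⟨N, hN, hMe ▸ Set.empty_subset N⟩ h
    · intro hM
      have hmod : isModel C M := by
        intro a
        rw [hC]
        constructor
        · intro ha; exact ⟨M, hM, ha, subset_rfl⟩
        · rintro ⟨N, hN, haN, hMN⟩
          rwa [hac M hM N hN hMN]
      refine ⟨hmod, ?_⟩
      have key : ∀ n, (gammaIter C M n).1 ⊆ M ∧ (gammaIter C M n).2 = ∅ := by
        intro n
        induction n with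
        | zero => exact ⟨Set.empty_subset M, rfl⟩
        | succ n ih =>
          constructor
          · intro a ha; exact ha.1
          · ext a
            simp only [gammaIter, Set.mem_empty_iff_false, iff_false]
            rintro ⟨haM, hrej⟩
            refine hrej M ih.1 ?_ ((hC a M).mpr ⟨M, hM, haM, subset_rfl⟩)
            rw [ih.2, Set.diff_empty]
      have h1 : (⋃ n, (gammaIter C M n).1) = M := by
        apply subset_antisymm
        · exact Set.iUnion_subset fun n => (key n).1
        · intro a ha
          refine Set.mem_iUnion.mpr ⟨1, ?_⟩
          exact ⟨ha, fun Z hQ hZ => (hC a Z).mpr ⟨M, hM, ha, fun z hz => (hZ hz).1⟩⟩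
      have h2 : (⋃ n, (gammaIter C M n).2) = ∅ :=
        Set.iUnion_eq_empty.mpr fun n => (key n).2
      simp only [gammaLfp]
      rw [h1, h2]
end

section
/- Let A be a finite vocabulary and X a nonempty ⊆-antichain of subsets of A. For the ADF D^st_X over A defined by C_a(Z) = t iff there exists M ∈ X with a ∈ M and Z ⊆ M, the set of (supported) models of D^st_X is also exactly X; that is, the supported and stable model sets of D^st_X coincide and both equal X. -/
/-- For a nonempty ⊆-antichain `X` over a finite vocabulary, the canonical ADF
`D^st_X` with acceptance conditions `C a Z = t` iff `∃ M ∈ X, a ∈ M ∧ Z ⊆ M`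
has exactly `X` as its set of (supported) models as well (so supported and
stable model sets of `D^st_X` coincide and both equal `X`). -/
theorem canonical_badf_realises_antichain_supported {α : Type*} [Fintype α]
    (X : Set (Set α)) (hne : X.Nonempty)
    (hac : ∀ M ∈ X, ∀ N ∈ X, M ⊆ N → M = N)
    (C : α → Set α → Prop)
    (hC : ∀ (a : α) (Z : Set α), C a Z ↔ ∃ M ∈ X, a ∈ M ∧ Z ⊆ M) :
    {M : Set α | isModel C M} = X := by
  ext M
  simp only [Set.mem_setOf_eq]
  constructor
  · intro hM
    -- First: there exists N ∈ X with M ⊆ N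
    have hsub : ∃ N ∈ X, M ⊆ N := by
      by_contra h
      push_neg at h
      have hMempty : M = ∅ := by
        ext a
        simp only [Set.mem_empty_iff_false, iff_false]
        intro haM
        obtain ⟨N, hN, _, hMN⟩ := (hC a M).mp ((hM a).mp haM)
        exact h N hN hMN
      obtain ⟨N, hN⟩ := hne
      exact h N hN (hMempty ▸ Set.empty_subset N)
    obtain ⟨N, hN, hMN⟩ := hsub
    have hNM : N ⊆ M := fun a haN =>
      (hM a).mpr ((hC a M).mpr ⟨N, hN, haN, hMN⟩)
    have : M = N := Set.Subset.antisymm hMN hNM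
    exact this ▸ hN
  · intro hMX a
    rw [hC]
    constructor
    · intro haM
      exact ⟨M, hMX, haM, Set.Subset.refl M⟩
    · rintro ⟨N, hN, haN, hMN⟩
      have := hac M hMX N hN hMN
      exact this ▸ haN
end

section
/- For every finite nonempty vocabulary A and every ⊆-antichain X of subsets of A (possibly empty), there exists a bipolar ADF D over A whose set of (supported) models is exactly X. In particular, bipolar ADFs under the supported model semantics are at least as expressive as bipolar ADFs, general ADFs, and normal logic programs under the stable model semantics. -/
/-- For every finite nonempty vocabulary and every ⊆-antichain `X` of
interpretations (possibly empty), there is a bipolar ADF whose set of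
(supported) models is exactly `X`; in particular BADF^su is at least as
expressive as BADF^st, ADF^st and LP^st, whose model sets are antichains. -/
theorem badf_supported_realises_antichains {α : Type*} [Fintype α] [Nonempty α]
    (X : Set (Set α)) (hac : ∀ M ∈ X, ∀ N ∈ X, M ⊆ N → M = N) :
    ∃ C : α → Set α → Prop, bipolar C ∧ {M : Set α | isModel C M} = X := by
  refine ⟨fun a Z => (∃ N ∈ X, a ∈ N ∧ Z ⊆ N) ∨ (X = ∅ ∧ a ∉ Z), ?_, ?_⟩
  · -- every link is attacking
    intro b a
    right
    intro Z h
    rcases h with ⟨N, hN, haN, hZN⟩ | ⟨hX, ha⟩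
    · exact Or.inl ⟨N, hN, haN, fun x hx => hZN (Or.inl hx)⟩
    · exact Or.inr ⟨hX, fun hx => ha (Or.inl hx)⟩
  · ext M
    simp only [Set.mem_setOf_eq, isModel]
    constructor
    · intro hM
      by_cases hX : X = ∅
      · -- no models in this case: contradiction from any a
        obtain ⟨a⟩ := ‹Nonempty α›
        have := hM a
        by_cases ha : a ∈ M
        · rcases (this.mp ha) with ⟨N, hN, _⟩ | ⟨_, ha'⟩
          · simp [hX] at hN
          · exact absurd ha ha'
        · exact absurd (this.mpr (Or.inr ⟨hX, ha⟩)) ha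
      · by_cases hMe : M = ∅
        · -- then X_a = ∅ for all a, so X = {∅}, so M ∈ X
          obtain ⟨N, hN⟩ := Set.nonempty_iff_ne_empty.mpr hX
          have hNM : N = ∅ := by
            by_contra hNe
            obtain ⟨a, haN⟩ := Set.nonempty_iff_ne_empty.mpr hNe
            have : a ∈ M := (hM a).mpr (Or.inl ⟨N, hN, haN, by simp [hMe]⟩)
            simp [hMe] at this
          subst hMe; rw [← hNM]; exact hN
        · obtain ⟨a, haM⟩ := Set.nonempty_iff_ne_empty.mpr hMe
          rcases (hM a).mp haM with ⟨N, hN, haN, hMN⟩ | ⟨hX', _⟩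
          · -- show N ⊆ M, hence M = N ∈ X
            have hNM : N ⊆ M := by
              intro b hbN
              exact (hM b).mpr (Or.inl ⟨N, hN, hbN, hMN⟩)
            have : M = N := Set.Subset.antisymm hMN hNM
            rw [this]; exact hN
          · exact absurd hX' hX
    · intro hMX a
      constructor
      · intro ha
        exact Or.inl ⟨M, hMX, ha, subset_refl M⟩
      · rintro (⟨N, hN, haN, hMN⟩ | ⟨hX, _⟩)
        · rw [hac M hMX N hN hMN]; exact haN
        · exact absurd hMX (by simp [hX])
end

section
/- For every finite nonempty vocabulary A and every ⊆-antichain X of subsets of A (possibly empty), there exists a bipolar ADF D over A whose set of stable models is exactly X. Consequently, bipolar ADFs, general ADFs, and normal logic programs are all equally expressive under the stable model semantics (BADF^st ≅_e ADF^st ≅_e LP^st). -/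
private lemma badf_iter_eq {α : Type*} {X : Set (Set α)} {M : Set α}
    (hM : M ∈ X) (n : ℕ) :
    gammaIter (fun a Z => ∃ N ∈ X, a ∈ N ∧ Z ⊆ N) M (n + 1) = (M, (∅ : Set α)) := by
  set C : α → Set α → Prop := fun a Z => ∃ N ∈ X, a ∈ N ∧ Z ⊆ N with hC
  induction n with
  | zero =>
    show (acc C M (gammaIter C M 0).1 (gammaIter C M 0).2,
          rej C M (gammaIter C M 0).1 (gammaIter C M 0).2) = (M, ∅)
    have h0 : gammaIter C M 0 = ((∅ : Set α), (∅ : Set α)) := rfl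
    rw [h0]
    refine Prod.ext ?_ ?_
    · ext a
      simp only [acc, Set.mem_setOf_eq]
      constructor
      · rintro ⟨ha, -⟩; exact ha
      · intro ha
        refine ⟨ha, fun Z _ hZ => ⟨M, hM, ha, hZ.trans Set.diff_subset⟩⟩
    · ext a
      simp only [rej, Set.mem_setOf_eq, Set.mem_empty_iff_false, iff_false, not_and]
      intro ha h
      exact h ∅ (Set.Subset.refl _) (Set.empty_subset _) ⟨M, hM, ha, Set.empty_subset _⟩
  | succ n ih =>
    show (acc C M (gammaIter C M (n+1)).1 (gammaIter C M (n+1)).2,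
          rej C M (gammaIter C M (n+1)).1 (gammaIter C M (n+1)).2) = (M, ∅)
    rw [ih]
    refine Prod.ext ?_ ?_
    · ext a
      simp only [acc, Set.mem_setOf_eq]
      constructor
      · rintro ⟨ha, -⟩; exact ha
      · intro ha
        refine ⟨ha, fun Z _ hZ => ⟨M, hM, ha, hZ.trans Set.diff_subset⟩⟩
    · ext a
      simp only [rej, Set.mem_setOf_eq, Set.mem_empty_iff_false, iff_false, not_and]
      intro ha h
      exact h M (Set.Subset.refl _) (by simp) ⟨M, hM, ha, Set.Subset.refl _⟩

/-- For every finite nonempty vocabulary and every ⊆-antichain `X` of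
interpretations (possibly empty), there is a bipolar ADF whose set of stable
models is exactly `X`.  (Consequently bipolar ADFs, general ADFs and normal
logic programs are equally expressive under the stable semantics.) -/
theorem badf_stable_realises_antichains {α : Type*} [Fintype α] [Nonempty α]
    (X : Set (Set α)) (hac : ∀ M ∈ X, ∀ N ∈ X, M ⊆ N → M = N) :
    ∃ C : α → Set α → Prop, bipolar C ∧
      {M : Set α | isStableModel C M} = X := by
  by_cases hX : X = ∅
  · -- no stable models: use C a Z := a ∉ Z, which has no models at all
    refine ⟨fun a Z => a ∉ Z, ?_, ?_⟩
    · intro b a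
      right
      intro Z h ha
      exact h (Set.mem_union_left _ ha)
    · subst hX
      ext M
      simp only [Set.mem_setOf_eq, Set.mem_empty_iff_false, iff_false]
      rintro ⟨hmod, -⟩
      obtain ⟨a⟩ := ‹Nonempty α›
      have h := hmod a
      by_cases ha : a ∈ M
      · exact (h.mp ha) ha
      · exact ha (h.mpr ha)
  · refine ⟨fun a Z => ∃ N ∈ X, a ∈ N ∧ Z ⊆ N, ?_, ?_⟩
    · -- bipolar: all links attacking (condition antitone in Z)
      intro b a
      right
      rintro Z ⟨N, hN, haN, hsub⟩
      exact ⟨N, hN, haN, fun x hx => hsub (Set.mem_union_left _ hx)⟩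
    · set C : α → Set α → Prop := fun a Z => ∃ N ∈ X, a ∈ N ∧ Z ⊆ N with hC
      ext M
      simp only [Set.mem_setOf_eq]
      constructor
      · rintro ⟨hmod, -⟩
        by_cases hex : ∃ N ∈ X, M ⊆ N
        · obtain ⟨N, hN, hMN⟩ := hex
          have hNM : N ⊆ M := fun b hb => (hmod b).mpr ⟨N, hN, hb, hMN⟩
          have hMeq : M = N := Set.Subset.antisymm hMN hNM
          rw [hMeq]; exact hN
        · exfalso
          obtain ⟨N₀, hN₀⟩ := Set.nonempty_iff_ne_empty.mpr hX
          have hM0 : M = ∅ := by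
            ext a
            simp only [Set.mem_empty_iff_false, iff_false]
            intro ha
            obtain ⟨N, hN, -, hMN⟩ := (hmod a).mp ha
            exact hex ⟨N, hN, hMN⟩
          exact hex ⟨N₀, hN₀, by simp [hM0]⟩
      · intro hM
        constructor
        · intro a
          constructor
          · intro ha; exact ⟨M, hM, ha, Set.Subset.refl M⟩
          · rintro ⟨N, hN, haN, hMN⟩
            rw [hac M hM N hN hMN]; exact haN
        · show gammaLfp C M = (M, ∅)
          have hiter := fun n => badf_iter_eq (X := X) hM n
          refine Prod.ext ?_ ?_
          · show (⋃ n : ℕ, (gammaIter C M n).1) = M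
            ext a
            simp only [Set.mem_iUnion]
            constructor
            · rintro ⟨n, ha⟩
              cases n with
              | zero => exact absurd ha (by simp [gammaIter])
              | succ n => rw [hiter n] at ha; exact ha
            · intro ha
              exact ⟨1, by rw [hiter 0]; exact ha⟩
          · show (⋃ n : ℕ, (gammaIter C M n).2) = ∅
            ext a
            simp only [Set.mem_iUnion, Set.mem_empty_iff_false, iff_false, not_exists]
            intro n ha
            cases n with
            | zero => exact absurd ha (by simp [gammaIter])
            | succ n => rw [hiter n] at ha; exact ha
end

section
/- For every ADF D over a finite vocabulary A, the set of stable models of D is a ⊆-antichain: whenever M and N are stable models of D with M ⊆ N, then M = N. -/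
/-- The set of stable models of any ADF over a finite vocabulary is a
⊆-antichain. -/
theorem adf_stable_antichain {α : Type*} [Fintype α]
    (C : α → Set α → Prop) (M N : Set α)
    (hM : isStableModel C M) (hN : isStableModel C N) (hMN : M ⊆ N) :
    M = N := by
  have hfst : (⋃ n : ℕ, (gammaIter C N n).1) = N := congrArg Prod.fst hN.2
  have hsnd : (⋃ n : ℕ, (gammaIter C N n).2) = (∅ : Set α) := congrArg Prod.snd hN.2
  have hrej : ∀ n, (gammaIter C N n).2 ⊆ (∅ : Set α) := fun n =>
    hsnd ▸ Set.subset_iUnion (fun n => (gammaIter C N n).2) n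
  have key : ∀ n, (gammaIter C N n).1 ⊆ M := by
    intro n
    induction n with
    | zero => simp [gammaIter]
    | succ n ih =>
      intro a ha
      have haM : C a M := ha.2 M ih (by
        intro x hx
        exact ⟨hMN hx, fun hxr => hrej n hxr⟩)
      exact (hM.1 a).mpr haM
  refine Set.Subset.antisymm hMN ?_
  rw [← hfst]
  exact Set.iUnion_subset key
end

section
/- The standard logic program translation of ADFs is not faithful for the stable semantics: the ADF D over vocabulary {a} with acceptance condition C_a(Z) = t for all Z (acceptance formula a ∨ ¬a) has {a} as a stable model, while its standard logic program P(D) = {a ← a, a ← not a} has no stable model. -/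
/-- A normal logic program rule `head ← pos ∪ not neg` with positive body
`pos` and negative body `neg`. -/
structure Rule (α : Type*) where
  head : α
  pos : Set α
  neg : Set α

/-- A rule is active in `M` iff its positive body is contained in `M` and its
negative body is disjoint from `M`. -/
def active {α : Type*} (r : Rule α) (M : Set α) : Prop :=
  r.pos ⊆ M ∧ r.neg ∩ M = ∅

/-- `M` is a supported model of the program `P` iff `M` consists exactly of
the heads of the rules of `P` that are active in `M`. -/
def supportedModel {α : Type*} (P : Set (Rule α)) (M : Set α) : Prop :=
  M = {a : α | ∃ r ∈ P, r.head = a ∧ active r M}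

/-- The Gelfond–Lifschitz reduct `P^M`: delete each rule whose negative body
meets `M` and remove the negated atoms from the remaining rules. -/
def reduct {α : Type*} (P : Set (Rule α)) (M : Set α) : Set (Rule α) :=
  {r' : Rule α | ∃ r ∈ P, r.neg ∩ M = ∅ ∧ r' = ⟨r.head, r.pos, ∅⟩}

/-- `M` is a stable model of `P` iff `M` is the ⊆-least supported model of the
definite program `P^M`. -/
def stableModelLP {α : Type*} (P : Set (Rule α)) (M : Set α) : Prop :=
  supportedModel (reduct P M) M ∧
    ∀ N : Set α, supportedModel (reduct P M) N → M ⊆ N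

/-- The standard logic program translation of ADFs is not faithful for the
stable semantics: over the vocabulary `{a}` (modelled as `Fin 1`), the ADF
with tautological acceptance condition (formula `a ∨ ¬a`) has `{a}` as a
stable model, while its standard logic program `{a ← a, a ← not a}` has no
stable model. -/
theorem standard_translation_not_stable_faithful
    (C : Fin 1 → Set (Fin 1) → Prop)
    (hC : ∀ (a : Fin 1) (Z : Set (Fin 1)), C a Z)
    (P : Set (Rule (Fin 1)))
    (hP : P = {⟨0, {0}, ∅⟩, ⟨0, ∅, {0}⟩}) :
    isStableModel C ({0} : Set (Fin 1)) ∧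
    ¬ ∃ M : Set (Fin 1), stableModelLP P M := by
  constructor
  · constructor
    · intro a
      simp [hC, Fin.fin_one_eq_zero a]
    · -- gammaLfp C {0} = ({0}, ∅)
      have key : ∀ n, (gammaIter C ({0} : Set (Fin 1)) n).1 ⊆ {0} ∧
          (gammaIter C ({0} : Set (Fin 1)) n).2 = ∅ := by
        intro n
        induction n with
        | zero => exact ⟨by simp [gammaIter], by simp [gammaIter]⟩
        | succ n ih =>
          constructor
          · intro a ha
            exact ha.1
          · ext a
            simp only [gammaIter, rej, Set.mem_setOf_eq, Set.mem_empty_iff_false,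
              iff_false, not_and]
            intro _ h
            refine absurd (h (gammaIter C {0} n).1 le_rfl ?_) (not_not_intro (hC a _))
            rw [ih.2, Set.diff_empty]
            exact ih.1
      have h1 : (⋃ n : ℕ, (gammaIter C ({0} : Set (Fin 1)) n).1) = {0} := by
        apply Set.Subset.antisymm
        · exact Set.iUnion_subset fun n => (key n).1
        · intro a ha
          refine Set.mem_iUnion.mpr ⟨1, ?_⟩
          simp only [gammaIter, acc, Set.mem_setOf_eq]
          exact ⟨ha, fun Z _ _ => hC a Z⟩
      have h2 : (⋃ n : ℕ, (gammaIter C ({0} : Set (Fin 1)) n).2) = (∅ : Set (Fin 1)) := by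
        simp only [fun n => (key n).2, Set.iUnion_empty]
      simp only [gammaLfp, h1, h2]
  · rintro ⟨M, hsupp, hmin⟩
    by_cases h0 : (0 : Fin 1) ∈ M
    · -- ∅ is a supported model of the reduct, contradicting minimality
      have hN : supportedModel (reduct P M) (∅ : Set (Fin 1)) := by
        unfold supportedModel
        ext a
        simp only [Set.mem_empty_iff_false, false_iff, Set.mem_setOf_eq]
        rintro ⟨r, hr, hhead, hact⟩
        obtain ⟨s, hs, hneg, rfl⟩ := hr
        rw [hP] at hs
        rcases hs with hs | hs
        · -- s = ⟨0, {0}, ∅⟩ : positive body {0} ⊄ ∅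
          subst hs
          exact absurd (hact.1 rfl) (Set.notMem_empty 0)
        · -- s = ⟨0, ∅, {0}⟩ : neg ∩ M ∋ 0
          simp only [Set.mem_singleton_iff] at hs
          subst hs
          have hm : (0 : Fin 1) ∈ (⟨0, ∅, {0}⟩ : Rule (Fin 1)).neg ∩ M := ⟨rfl, h0⟩
          rw [hneg] at hm
          exact hm
      exact (hmin ∅ hN h0)
    · -- 0 ∉ M : the fact rule "a ← not a" fires, so 0 ∈ M, contradiction
      have hMneg : ({0} : Set (Fin 1)) ∩ M = ∅ := by
        ext x
        simp [Fin.fin_one_eq_zero x, h0]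
      have : (0 : Fin 1) ∈ {a : Fin 1 | ∃ r ∈ reduct P M, r.head = a ∧ active r M} := by
        refine ⟨⟨0, ∅, ∅⟩, ⟨⟨0, ∅, {0}⟩, ?_, hMneg, rfl⟩, rfl, ?_, ?_⟩
        · rw [hP]; right; rfl
        · exact Set.empty_subset M
        · exact Set.empty_inter M
      rw [← hsupp] at this
      exact h0 this
end

section
/- For every finite nonempty vocabulary A and every collection X of subsets of A, there exists a normal logic program P over A whose set of supported models is exactly X. (Normal logic programs under the supported model semantics are as expressive as propositional logic: LP^su ≅_e PL ≅_e ADF^su.) -/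
/-- For every finite nonempty vocabulary and every collection `X` of
interpretations there is a normal logic program whose set of supported models
is exactly `X` (LP^su is as expressive as propositional logic). -/
theorem lp_supported_realises_everything {α : Type*} [Fintype α] [Nonempty α]
    (X : Set (Set α)) :
    ∃ P : Set (Rule α), {M : Set α | supportedModel P M} = X := by
  obtain ⟨a₀⟩ := ‹Nonempty α›
  refine ⟨{r | ∃ M ∈ X, r.head ∈ M ∧ r.pos = M ∧ r.neg = Mᶜ} ∪
    {r | ∅ ∉ X ∧ r = ⟨a₀, ∅, Set.univ⟩}, ?_⟩
  have key : ∀ M M' : Set α, M ⊆ M' → Mᶜ ∩ M' = ∅ → M' = M := by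
    intro M M' h1 h2
    refine Set.Subset.antisymm (fun x hx => ?_) h1
    by_contra hxM
    exact absurd h2 (Set.nonempty_iff_ne_empty.mp ⟨x, hxM, hx⟩)
  ext M'
  simp only [Set.mem_setOf_eq, supportedModel]
  constructor
  · intro h
    rcases Set.eq_empty_or_nonempty M' with rfl | ⟨a, ha⟩
    · by_contra hne
      have : a₀ ∈ (∅ : Set α) := by
        rw [h]
        exact ⟨⟨a₀, ∅, Set.univ⟩, Or.inr ⟨hne, rfl⟩, rfl,
          by simp [active]⟩
      exact this
    · have := h ▸ ha
      obtain ⟨r, hr, hrh, hact⟩ := this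
      rcases hr with ⟨M, hMX, _, hpos, hneg⟩ | ⟨_, rfl⟩
      · have : M' = M := key M M' (hpos ▸ hact.1) (hneg ▸ hact.2)
        rwa [this]
      · exfalso
        have := hact.2
        simp only [Set.univ_inter] at this
        exact (Set.nonempty_iff_ne_empty.mp ⟨a, ha⟩) this
  · intro hM'
    ext a
    simp only [Set.mem_setOf_eq]
    constructor
    · intro ha
      exact ⟨⟨a, M', M'ᶜ⟩, Or.inl ⟨M', hM', ha, rfl, rfl⟩, rfl,
        subset_rfl, by simp⟩
    · rintro ⟨r, hr, rfl, hact⟩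
      rcases hr with ⟨M, hMX, hhd, hpos, hneg⟩ | ⟨hne, rfl⟩
      · have : M' = M := key M M' (hpos ▸ hact.1) (hneg ▸ hact.2)
        exact this ▸ hhd
      · exfalso
        have := hact.2
        simp only [Set.univ_inter] at this
        exact hne (this ▸ hM')
end

section
/- Bipolar ADFs under the supported model semantics are strictly more expressive than bipolar ADFs under the stable model semantics: there exists a bipolar ADF D (namely, the ADF over {a} with C_a(Z) = t iff a ∈ Z, whose supported model set is {∅, {a}}) such that no ADF D' over the same vocabulary has its set of stable models equal to the set of supported models of D, since stable model sets are ⊆-antichains while {∅, {a}} is not. -/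
/-- BADF^su is strictly more expressive than BADF^st: the bipolar ADF over
`{a}` (modelled as `Fin 1`) with acceptance condition `C a Z = t` iff `a ∈ Z`
has supported model set `{∅, {a}}`, and no ADF over the same vocabulary has
this set as its set of stable models (stable model sets are ⊆-antichains,
while `{∅, {a}}` is not). -/
theorem badf_supported_strictly_more_expressive_than_stable
    (C : Fin 1 → Set (Fin 1) → Prop)
    (hC : ∀ (a : Fin 1) (Z : Set (Fin 1)), C a Z ↔ a ∈ Z) :
    bipolar C ∧
    {M : Set (Fin 1) | isModel C M} = ({∅, {0}} : Set (Set (Fin 1))) ∧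
    ¬ ∃ C' : Fin 1 → Set (Fin 1) → Prop,
        {M : Set (Fin 1) | isStableModel C' M}
          = {M : Set (Fin 1) | isModel C M} := by

  have hmodel : ∀ M : Set (Fin 1), isModel C M := by
    intro M a; rw [hC]
  have hset : {M : Set (Fin 1) | isModel C M} = ({∅, {0}} : Set (Set (Fin 1))) := by
    ext M
    simp only [Set.mem_setOf_eq, Set.mem_insert_iff, Set.mem_singleton_iff]
    constructor
    · intro _
      by_cases h0 : (0 : Fin 1) ∈ M
      · right; ext x; fin_cases x; simp [h0]
      · left; ext x; fin_cases x; simp [h0]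
    · intro _; exact hmodel M
  refine ⟨?_, hset, ?_⟩
  · intro b a; left
    intro Z h
    rw [hC] at h ⊢
    exact Set.mem_union_left _ h
  · rintro ⟨C', hEq⟩
    rw [hset] at hEq
    have h0 : isStableModel C' ∅ := by
      have : (∅ : Set (Fin 1)) ∈ {M : Set (Fin 1) | isStableModel C' M} := by
        rw [hEq]; left; rfl
      exact this
    have h1 : isStableModel C' {0} := by
      have : ({0} : Set (Fin 1)) ∈ {M : Set (Fin 1) | isStableModel C' M} := by
        rw [hEq]; right; rfl
      exact this
    have hnot : ∀ a : Fin 1, ¬ C' a ∅ := by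
      intro a h
      exact ((h0.1 a).mpr h)
    have hiter : ∀ n, (gammaIter C' {0} n).1 = (∅ : Set (Fin 1)) := by
      intro n
      induction n with
      | zero => rfl
      | succ n ih =>
        ext a
        simp only [gammaIter, acc, ih, Set.mem_setOf_eq, Set.mem_empty_iff_false,
          iff_false, not_and]
        intro _ hZ
        exact hnot a (hZ ∅ (Set.empty_subset _) (Set.empty_subset _))
    have hmem : (0 : Fin 1) ∈ (gammaLfp C' {0}).1 := by
      rw [h1.2]; exact rfl
    simp only [gammaLfp, Set.mem_iUnion] at hmem
    obtain ⟨n, hn⟩ := hmem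
    rw [hiter n] at hn
    exact hn
end

section
/- For every finite vocabulary A and every nonempty ⊆-antichain X of subsets of A, there exists a normal logic program P over A whose set of stable models is exactly X; for example, the program P = {a ← {not b : b ∈ A \ M} : M ∈ X, a ∈ M} has st(P) = X. -/
/-- For every finite vocabulary and every nonempty ⊆-antichain `X`, the normal
logic program `P = {a ← {not b : b ∈ A \ M} : M ∈ X, a ∈ M}` has `X` as its
set of stable models; in particular every nonempty antichain is realisable by
a normal logic program under the stable model semantics. -/
theorem lp_stable_realises_antichains {α : Type*} [Fintype α]
    (X : Set (Set α)) (hne : X.Nonempty)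
    (hac : ∀ M ∈ X, ∀ N ∈ X, M ⊆ N → M = N)
    (P : Set (Rule α))
    (hP : P = {r : Rule α | ∃ M ∈ X, r.head ∈ M ∧ r.pos = ∅ ∧ r.neg = Mᶜ}) :
    {M : Set α | stableModelLP P M} = X := by
  subst hP
  set P : Set (Rule α) := {r : Rule α | ∃ M ∈ X, r.head ∈ M ∧ r.pos = ∅ ∧ r.neg = Mᶜ}
  ext M
  -- the set of heads of active reduct rules, for any interpretation T
  have hheads : ∀ T : Set α,
      {a : α | ∃ r ∈ reduct P M, r.head = a ∧ active r T}
        = {a : α | ∃ N ∈ X, M ⊆ N ∧ a ∈ N} := by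
    intro T
    ext a
    simp only [Set.mem_setOf_eq, reduct]
    constructor
    · rintro ⟨r', ⟨r, ⟨N, hN, hhead, hpos, hneg⟩, hdisj, rfl⟩, rfl, _⟩
      refine ⟨N, hN, ?_, hhead⟩
      intro x hx
      by_contra hxN
      have hmem : x ∈ r.neg ∩ M := ⟨by rw [hneg]; exact hxN, hx⟩
      rw [hdisj] at hmem
      exact hmem
    · rintro ⟨N, hN, hMN, haN⟩
      refine ⟨⟨a, (∅ : Set α), (∅ : Set α)⟩,
        ⟨⟨a, ∅, Nᶜ⟩, ⟨N, hN, haN, rfl, rfl⟩, ?_, rfl⟩, rfl,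
        Set.empty_subset _, Set.empty_inter _⟩
      ext x
      simp only [Set.mem_inter_iff, Set.mem_compl_iff, Set.mem_empty_iff_false,
        iff_false, not_and]
      intro hx hxM
      exact hx (hMN hxM)
  have hsupp : ∀ T : Set α, supportedModel (reduct P M) T ↔
      T = {a : α | ∃ N ∈ X, M ⊆ N ∧ a ∈ N} := by
    intro T
    rw [supportedModel, hheads T]
  have hstable : stableModelLP P M ↔ M = {a : α | ∃ N ∈ X, M ⊆ N ∧ a ∈ N} := by
    constructor
    · intro h
      exact (hsupp M).mp h.1
    · intro h
      refine ⟨(hsupp M).mpr h, fun N hNs => ?_⟩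
      rw [(hsupp N).mp hNs, ← h]
  simp only [Set.mem_setOf_eq, hstable]
  constructor
  · intro h
    by_cases hex : ∃ N ∈ X, M ⊆ N
    · obtain ⟨N, hN, hMN⟩ := hex
      have hNM : N ⊆ M := by
        intro a ha
        rw [h]
        exact ⟨N, hN, hMN, ha⟩
      rw [Set.Subset.antisymm hMN hNM]
      exact hN
    · exfalso
      obtain ⟨N, hN⟩ := hne
      have hME : M = ∅ := by
        rw [h]
        ext a
        simp only [Set.mem_setOf_eq, Set.mem_empty_iff_false, iff_false, not_exists]
        rintro N' ⟨hN', hMN', _⟩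
        exact hex ⟨N', hN', hMN'⟩
      exact hex ⟨N, hN, hME ▸ Set.empty_subset N⟩
  · intro hM
    ext a
    simp only [Set.mem_setOf_eq]
    constructor
    · intro ha
      exact ⟨M, hM, subset_rfl, ha⟩
    · rintro ⟨N, hN, hMN, haN⟩
      rwa [hac M hM N hN hMN]
end
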